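/- arXiv:1508.00938 — 3 statements merged into one kernel-verified Lean document; each statement's English description precedes it below -/
import Mathlib

section
/- Pauli support of the full encoded state (equation (r-decomposition)): let n ≡ 1 (mod 4) and let p, m be positive integers, q = n+m. For any density matrix Ψ on p qubits, U·E(Ψ)·U† = 2^{−pq} · Σ_{v ∈ {0,1,2,3}^p} tr(σ_v Ψ) · σ_{A_v}, where σ_v = ⊗_{x=1}^{p} σ_{v(x)} is a Pauli string on the p input qubits and A_v is the p×q matrix whose first n columns each equal v and whose last m columns are zero. -/
/-!
Every gate of `U` permutes the computational basis. Row by row, `U` writes the parity of the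
first `n` qubits into the first one and then adds it to the other `n - 1`; for odd `n` this map
is invertible, so conjugating `E(Ψ)` by `U` only relabels its entries: the entry at `(g, f)` is,
up to the factor `2^{-p(q-1)}`, the entry of `Ψ` at the row parities of `g` and `f`, provided the
decoded `g` and `f` agree off the first column.

On the Pauli side, `σ_w^{⊗n}` has a nonzero entry at `(G, F)` only if `F - G` is constant, and
then, because `n ≡ 1 (mod 4)`, that entry equals `σ_w(ΣG, ΣF)`. The completeness relation
`Σ_w σ_w(a, b) σ_w(c, d) = 2 δ_{ad} δ_{bc}` then collapses `Σ_v tr(σ_v Ψ) σ_{A_v}` to the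
same entries of `Ψ`, with the factor `2^p`.
-/

open Matrix ComplexOrder

noncomputable section

/-- States of a `p × q` grid of qubits. -/
abbrev GState (p q : ℕ) := Fin p × Fin q → Fin 2

/-- Operators on a `p × q` grid of qubits. -/
abbrev GMat (p q : ℕ) := Matrix (GState p q) (GState p q) ℂ

/-- The CNOT gate on the grid with control qubit `c` and target qubit `t`:
the permutation matrix mapping the basis state `f` to `f` updated at `t` to
`f t + f c` (mod 2). -/
def gCNOT {p q : ℕ} (c t : Fin p × Fin q) : GMat p q :=
  fun g f => if g = Function.update f t (f t + f c) then 1 else 0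

/-- The encoding unitary `U_x = (C_{(x,1)→(x,2)} ⋯ C_{(x,1)→(x,n)})·
(C_{(x,2)→(x,1)} ⋯ C_{(x,n)→(x,1)})` acting on the first `n` columns of row `x`
(columns 1-indexed in the informal statement, 0-indexed here). -/
def rowU {p q : ℕ} (n : ℕ) (hn : 0 < n) (hnq : n ≤ q) (x : Fin p) : GMat p q :=
  (((List.range n).map fun j =>
      if hj : 0 < j ∧ j < n then
        gCNOT (x, ⟨0, lt_of_lt_of_le hn hnq⟩) (x, ⟨j, lt_of_lt_of_le hj.2 hnq⟩)
      else 1).prod) *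
  (((List.range n).map fun j =>
      if hj : 0 < j ∧ j < n then
        gCNOT (x, ⟨j, lt_of_lt_of_le hj.2 hnq⟩) (x, ⟨0, lt_of_lt_of_le hn hnq⟩)
      else 1).prod)

/-- The full encoding unitary `U = ⊗_x U_x` (identity on columns `n+1,…,q`). -/
def encU (p q n : ℕ) (hn : 0 < n) (hnq : n ≤ q) : GMat p q :=
  ((List.finRange p).map fun x => rowU n hn hnq x).prod

/-- The channel `E` which takes a density matrix `Ψ` on the `p` qubits of the first
column and returns `Ψ ⊗ (I/2)^{⊗ p(q−1)}` on the full grid, the maximally mixed state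
on all other columns. -/
def Echan (p q : ℕ) (hq : 0 < q) (Ψ : Matrix (Fin p → Fin 2) (Fin p → Fin 2) ℂ) :
    GMat p q :=
  fun g f =>
    Ψ (fun x => g (x, ⟨0, hq⟩)) (fun x => f (x, ⟨0, hq⟩)) *
      (if ∀ (x : Fin p) (y : Fin q), y ≠ ⟨0, hq⟩ → g (x, y) = f (x, y) then
        ((1 : ℂ) / 2) ^ (p * (q - 1)) else 0)

/-- For a permutation `π` of the columns, `P_π` is the unitary permutation matrix
mapping the basis state `f` to the basis state `g` with `g (x, π y) = f (x, y)`. -/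
def permMat (p q : ℕ) (π : Equiv.Perm (Fin q)) : GMat p q :=
  fun g f => if ∀ (x : Fin p) (y : Fin q), g (x, π y) = f (x, y) then 1 else 0

/-- The average `(1/q!)·Σ_{π ∈ S_q} P_π ρ P_π†` of `ρ` over all column permutations. -/
def permAvg (p q : ℕ) (ρ : GMat p q) : GMat p q :=
  ((Nat.factorial q : ℂ))⁻¹ •
    ∑ π : Equiv.Perm (Fin q), permMat p q π * ρ * (permMat p q π)ᴴ

/-- The Pauli matrices `σ₀ = I`, `σ₁ = X`, `σ₂ = Y`, `σ₃ = Z`. -/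
def pauli : Fin 4 → Matrix (Fin 2) (Fin 2) ℂ :=
  ![1, !![0, 1; 1, 0], !![0, -Complex.I; Complex.I, 0], !![1, 0; 0, -1]]

/-- For a `p × q` matrix `A` with entries in `{0,1,2,3}`, the Pauli string
`σ_A = ⊗_{(x,y)} σ_{A(x,y)}` on the grid. -/
def gridPauli {p q : ℕ} (A : Fin p → Fin q → Fin 4) : GMat p q :=
  fun g f => ∏ z : Fin p × Fin q, pauli (A z.1 z.2) (g z) (f z)

/-- The Pauli string `σ_v = ⊗_{x} σ_{v(x)}` on the `p` input qubits. -/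
def pauliString {p : ℕ} (v : Fin p → Fin 4) :
    Matrix (Fin p → Fin 2) (Fin p → Fin 2) ℂ :=
  fun g f => ∏ x : Fin p, pauli (v x) (g x) (f x)

section FunMatrix

variable {α R : Type*} [DecidableEq α] [Semiring R]

def funMatrix (a : Function.End α) : Matrix α α R := fun g f => if g = a f then 1 else 0

lemma funMatrix_mul [Fintype α] (a b : Function.End α) :
    (funMatrix (a * b) : Matrix α α R) = funMatrix a * funMatrix b := by
  ext g f
  have hab : (a * b) f = a (b f) := rfl
  rw [mul_apply, Finset.sum_eq_single (b f)] <;> simp +contextual [funMatrix, hab, eq_comm]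

lemma funMatrix_one : (funMatrix 1 : Matrix α α R) = 1 := by
  ext g f
  simp [funMatrix, one_apply, Function.End.one_def]

def funMatrixHom [Fintype α] : Function.End α →* Matrix α α R where
  toFun := funMatrix
  map_one' := funMatrix_one
  map_mul' := funMatrix_mul

lemma funMatrix_equiv_mul [Fintype α] (e : α ≃ α) (M : Matrix α α R) :
    funMatrix (e : α → α) * M = M.submatrix e.symm id := by
  ext g f
  rw [mul_apply, Finset.sum_eq_single (e.symm g)] <;>
    simp +contextual [funMatrix, Equiv.eq_symm_apply, eq_comm]

lemma mul_conjTranspose_funMatrix_equiv [Fintype α] [StarRing R] (e : α ≃ α) (M : Matrix α α R) :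
    M * (funMatrix (e : α → α))ᴴ = M.submatrix id e.symm := by
  ext g f
  rw [mul_apply, Finset.sum_eq_single (e.symm f)] <;>
    simp +contextual [funMatrix, Equiv.eq_symm_apply, eq_comm]

lemma funMatrix_mul_mul_conjTranspose [Fintype α] [StarRing R] (e : α ≃ α) (M : Matrix α α R) :
    funMatrix (e : α → α) * M * (funMatrix (e : α → α))ᴴ = M.submatrix e.symm e.symm := by
  rw [funMatrix_equiv_mul, mul_conjTranspose_funMatrix_equiv]
  rfl

end FunMatrix

lemma list_prod_map_funMatrix {ι α R : Type*} [DecidableEq α] [Fintype α] [Semiring R]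
    (L : List ι) (φ : ι → Function.End α) :
    (L.map fun i => (funMatrix (φ i) : Matrix α α R)).prod = funMatrix (L.map φ).prod := by
  have := map_list_prod (funMatrixHom (α := α) (R := R)) (L.map φ)
  rw [List.map_map] at this
  exact this.symm

lemma list_prod_map_range_eq_funMatrix {α R : Type*} [DecidableEq α] [Fintype α] [Semiring R]
    {n : ℕ} (F : ℕ → Matrix α α R) (φ : Fin n → Function.End α)
    (h : ∀ i : Fin n, F i = funMatrix (φ i)) :
    ((List.range n).map F).prod = funMatrix ((List.finRange n).map φ).prod := by
  rw [← List.map_coe_finRange_eq_range, List.map_map, ← list_prod_map_funMatrix]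
  exact congrArg List.prod (List.map_congr_left fun i _ => h i)

section Shift

variable {ι α : Type*}

lemma apply_list_prod_map_eq_of_forall {β : Type*} (L : List ι) (φ : ι → Function.End α)
    (F : α → β) (h : ∀ i ∈ L, ∀ f, F (φ i f) = F f) (f : α) :
    F ((L.map φ).prod f) = F f := by
  induction L with
  | nil => rfl
  | cons a L ih =>
    simp only [List.mem_cons, forall_eq_or_imp] at h
    exact (h.1 _).trans (ih h.2)

lemma list_prod_map_apply_eq_add_sum {M : Type*} [AddCommMonoid M] (L : List ι)
    (φ : ι → Function.End (α → M)) (δ : ι → (α → M) → α → M)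
    (hφ : ∀ i ∈ L, ∀ f, φ i f = f + δ i f) (hδ : ∀ i ∈ L, ∀ j ∈ L, ∀ f, δ i (φ j f) = δ i f)
    (f : α → M) : (L.map φ).prod f = f + (L.map (δ · f)).sum := by
  induction L with
  | nil => exact (add_zero f).symm
  | cons a L ih =>
    simp only [List.mem_cons, forall_eq_or_imp] at hφ hδ
    have hinv : δ a ((L.map φ).prod f) = δ a f :=
      apply_list_prod_map_eq_of_forall L φ (δ a) hδ.1.2 f
    change φ a ((L.map φ).prod f) = _
    rw [hφ.1, hinv, ih hφ.2 (fun i hi => (hδ.2 i hi).2), List.map_cons, List.sum_cons,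
      add_comm (δ a f), add_assoc]

end Shift

def cnot {α : Type*} [DecidableEq α] (c t : α) : Function.End (α → Fin 2) :=
  fun f => Function.update f t (f t + f c)

lemma gCNOT_eq_funMatrix {p q : ℕ} (c t : Fin p × Fin q) : gCNOT c t = funMatrix (cnot c t) :=
  rfl

lemma cnot_apply {α : Type*} [DecidableEq α] (c t : α) (f : α → Fin 2) :
    cnot c t f = f + Pi.single t (f c) := by
  ext z
  by_cases hz : z = t <;> simp [cnot, hz]

lemma ite_cnot_apply {α : Type*} [DecidableEq α] (P : Prop) [Decidable P] (c t : α)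
    (f : α → Fin 2) :
    (if P then cnot c t else 1 : Function.End (α → Fin 2)) f =
      f + if P then Pi.single t (f c) else 0 := by
  split_ifs
  · exact cnot_apply c t f
  · exact (add_zero f).symm

lemma cnot_apply_of_ne {α : Type*} [DecidableEq α] {c t z : α} (h : z ≠ t) (f : α → Fin 2) :
    cnot c t f z = f z :=
  Function.update_of_ne h _ _

def onRow {α β M : Type*} [DecidableEq α] (x : α) (R : Function.End (β → M)) :
    Function.End (α × β → M) :=
  fun f z => if z.1 = x then R (fun y => f (x, y)) z.2 else f z

lemma list_prod_map_onRow_apply {α β M : Type*} [DecidableEq α] (R : Function.End (β → M))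
    (L : List α) (hL : L.Nodup) (f : α × β → M) (z : α × β) :
    (L.map (onRow · R)).prod f z = if z.1 ∈ L then R (fun y => f (z.1, y)) z.2 else f z := by
  induction L generalizing z with
  | nil => rfl
  | cons a L ih =>
    obtain ⟨haL, hL⟩ := List.nodup_cons.mp hL
    change onRow a R ((L.map (onRow · R)).prod f) z = _
    by_cases hz : z.1 = a
    · have hrow : ∀ y, (L.map (onRow · R)).prod f (a, y) = f (a, y) := fun y => by
        rw [ih hL]; exact if_neg haL
      simp only [onRow, hz, hrow, List.mem_cons_self, if_true]
    · simp only [onRow, hz, if_false, ih hL, List.mem_cons, false_or]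

section RowCircuit

variable {p q n : ℕ} (hn : 0 < n) (hnq : n ≤ q) (x : Fin p)

def rowParity (v : Fin q → Fin 2) : Fin 2 := ∑ j : Fin n, v (Fin.castLE hnq j)

def fanIn : Function.End (GState p q) :=
  ((List.finRange n).map fun i : Fin n =>
    if 0 < (i : ℕ) then cnot (x, Fin.castLE hnq i) (x, ⟨0, lt_of_lt_of_le hn hnq⟩) else 1).prod

def fanOut : Function.End (GState p q) :=
  ((List.finRange n).map fun i : Fin n =>
    if 0 < (i : ℕ) then cnot (x, ⟨0, lt_of_lt_of_le hn hnq⟩) (x, Fin.castLE hnq i) else 1).prod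

lemma fanIn_apply (f : GState p q) :
    fanIn hn hnq x f =
      Function.update f (x, ⟨0, lt_of_lt_of_le hn hnq⟩) (rowParity hnq fun y => f (x, y)) := by
  set t : Fin p × Fin q := (x, ⟨0, lt_of_lt_of_le hn hnq⟩)
  have ht : ∀ i : Fin n, 0 < (i : ℕ) → (x, Fin.castLE hnq i) ≠ t := fun i hi h => by
    simp [t, Prod.ext_iff, Fin.ext_iff] at h; omega
  rw [fanIn, list_prod_map_apply_eq_add_sum _ _
    (fun (i : Fin n) f => if 0 < (i : ℕ) then Pi.single t (f (x, Fin.castLE hnq i)) else 0)]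
  · obtain ⟨k, rfl⟩ := Nat.exists_eq_add_one_of_ne_zero hn.ne'
    ext z
    rw [← Fin.sum_univ_def, Pi.add_apply, Finset.sum_apply, Function.update_apply]
    split_ifs with hz
    · simp only [hz, ite_apply, Pi.single_eq_same, Pi.zero_apply, rowParity, Fin.sum_univ_succ,
        Fin.val_zero, lt_irrefl, if_false, Fin.val_succ, Nat.succ_pos, if_true, zero_add]
      rfl
    · simp [ite_apply, hz]
  · exact fun i _ f => ite_cnot_apply _ _ _ f
  · intro i _ j _ f
    split_ifs with hi hj
    · rw [cnot_apply_of_ne (ht i hi)]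
    all_goals rfl

lemma fanOut_apply (f : GState p q) (z : Fin p × Fin q) :
    fanOut hn hnq x f z =
      if z.1 = x ∧ 0 < (z.2 : ℕ) ∧ (z.2 : ℕ) < n
      then f z + f (x, ⟨0, lt_of_lt_of_le hn hnq⟩) else f z := by
  set t : Fin p × Fin q := (x, ⟨0, lt_of_lt_of_le hn hnq⟩)
  have ht : ∀ i : Fin n, 0 < (i : ℕ) → (x, Fin.castLE hnq i) ≠ t := fun i hi h => by
    simp [t, Prod.ext_iff, Fin.ext_iff] at h; omega
  rw [fanOut, list_prod_map_apply_eq_add_sum _ _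
    (fun (i : Fin n) f => if 0 < (i : ℕ) then Pi.single (x, Fin.castLE hnq i) (f t) else 0)]
  · rw [← Fin.sum_univ_def, Pi.add_apply, Finset.sum_apply]
    simp only [ite_apply, Pi.single_apply, Pi.zero_apply]
    split_ifs with hz
    · obtain ⟨hzx, hz0, hzn⟩ := hz
      rw [Finset.sum_eq_single ⟨z.2, hzn⟩]
      · simp [hz0, Prod.ext_iff, hzx]
      · intro i _ hi
        simp only [Prod.ext_iff, Fin.ext_iff, ne_eq] at hi ⊢
        split_ifs <;> simp_all
      · simp
    · rw [Finset.sum_eq_zero, add_zero]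
      intro i _
      split_ifs with hi hzi
      · exact absurd ⟨congrArg Prod.fst hzi, by simp [hzi, hi], by simp [hzi]⟩ hz
      all_goals rfl
  · exact fun i _ f => ite_cnot_apply _ _ _ f
  · intro i _ j _ f
    split_ifs with hi hj
    · rw [cnot_apply_of_ne (ht j hj).symm]
    all_goals rfl

def encodeRow : Function.End (Fin q → Fin 2) := fun v y =>
  if (y : ℕ) < n then (if (y : ℕ) = 0 then rowParity hnq v else v y + rowParity hnq v) else v y

lemma rowU_eq_funMatrix : rowU n hn hnq x = funMatrix (onRow x (encodeRow hnq)) := by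
  rw [rowU, list_prod_map_range_eq_funMatrix _ (fun i : Fin n =>
      if 0 < (i : ℕ) then cnot (x, ⟨0, lt_of_lt_of_le hn hnq⟩) (x, Fin.castLE hnq i) else 1),
    list_prod_map_range_eq_funMatrix _ (fun i : Fin n =>
      if 0 < (i : ℕ) then cnot (x, Fin.castLE hnq i) (x, ⟨0, lt_of_lt_of_le hn hnq⟩) else 1),
    ← funMatrix_mul]
  · congr 1
    funext f ⟨z₁, z₂⟩
    change fanOut hn hnq x (fanIn hn hnq x f) (z₁, z₂) = _
    rw [fanOut_apply, fanIn_apply]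
    by_cases hz₁ : z₁ = x
    · subst hz₁
      simp only [onRow, encodeRow, Function.update_apply, Prod.ext_iff, Fin.ext_iff, true_and]
      split_ifs <;> first | rfl | omega
    · simp [onRow, hz₁]
  all_goals
    intro i
    split_ifs with h₁ h₂ h₂
    · exact gCNOT_eq_funMatrix _ _
    · exact absurd h₁.1 h₂
    · exact absurd ⟨h₂, i.isLt⟩ h₁
    · exact funMatrix_one.symm

end RowCircuit

lemma fin_two_add_self (a : Fin 2) : a + a = 0 := by decide +revert

lemma Even.nsmul_fin_two {k : ℕ} (hk : Even k) (a : Fin 2) : k • a = 0 := by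
  obtain ⟨j, rfl⟩ := hk
  rw [add_nsmul, fin_two_add_self]

lemma Odd.nsmul_fin_two {k : ℕ} (hk : Odd k) (a : Fin 2) : k • a = a := by
  obtain ⟨j, rfl⟩ := hk
  rw [add_nsmul, one_nsmul, (even_two_mul j).nsmul_fin_two, zero_add]

section RowCode

variable {q n : ℕ} (hn : 0 < n) (hnq : n ≤ q)

def decodeRow : Function.End (Fin q → Fin 2) := fun v y =>
  if (y : ℕ) < n then (if (y : ℕ) = 0 then rowParity hnq v else v y + v ⟨0, lt_of_lt_of_le hn hnq⟩)
  else v y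

lemma decodeRow_apply_zero (v : Fin q → Fin 2) :
    decodeRow hn hnq v ⟨0, lt_of_lt_of_le hn hnq⟩ = rowParity hnq v := by
  simp [decodeRow, hn]

lemma rowParity_eq_of_shift (hodd : Odd n) {u v : Fin q → Fin 2} (d : Fin 2)
    (h₀ : u ⟨0, lt_of_lt_of_le hn hnq⟩ = rowParity hnq v)
    (h : ∀ y : Fin q, 0 < (y : ℕ) → (y : ℕ) < n → u y = v y + d) :
    rowParity hnq u = v ⟨0, lt_of_lt_of_le hn hnq⟩ := by
  obtain ⟨k, rfl⟩ := Nat.exists_eq_add_one_of_ne_zero hn.ne'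
  have hk : Even k := by simpa [Nat.odd_add_one] using hodd
  have hsucc : ∀ i : Fin k, u (Fin.castLE hnq i.succ) = v (Fin.castLE hnq i.succ) + d :=
    fun i => h _ (Nat.succ_pos _) i.succ.isLt
  rw [rowParity, Fin.sum_univ_succ] at h₀ ⊢
  change u (Fin.castLE hnq 0) = _ at h₀
  rw [h₀, Finset.sum_congr rfl fun i _ => hsucc i, Finset.sum_add_distrib, Finset.sum_const,
    Finset.card_univ, Fintype.card_fin, hk.nsmul_fin_two, add_zero, add_assoc, fin_two_add_self,
    add_zero]
  rfl

def codeEquiv (hodd : Odd n) : (Fin q → Fin 2) ≃ (Fin q → Fin 2) where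
  toFun := encodeRow hnq
  invFun := decodeRow hn hnq
  left_inv v := by
    have hpar := rowParity_eq_of_shift hn hnq hodd (rowParity hnq v) (u := encodeRow hnq v) (v := v)
      (by simp [encodeRow, hn]) fun y h₀ hyn => by simp [encodeRow, hyn, h₀.ne']
    funext y
    simp only [decodeRow, hpar]
    split_ifs with hyn hy₀
    · exact congrArg v (Fin.ext hy₀.symm)
    · simp [encodeRow, hyn, hy₀, hn, add_assoc, fin_two_add_self]
    · simp [encodeRow, hyn]
  right_inv w := by
    have hpar := rowParity_eq_of_shift hn hnq hodd (w ⟨0, lt_of_lt_of_le hn hnq⟩)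
      (u := decodeRow hn hnq w) (v := w) (by simp [decodeRow, hn]) fun y h₀ hyn => by
        simp [decodeRow, hyn, h₀.ne']
    funext y
    simp only [encodeRow, hpar]
    split_ifs with hyn hy₀
    · exact congrArg w (Fin.ext hy₀.symm)
    · simp [decodeRow, hyn, hy₀, add_assoc, fin_two_add_self]
    · simp [decodeRow, hyn]

lemma codeEquiv_symm (hodd : Odd n) : ⇑(codeEquiv hn hnq hodd).symm = decodeRow hn hnq :=
  rfl

end RowCode

def rowwise {α β M : Type*} (e : (β → M) ≃ (β → M)) : (α × β → M) ≃ (α × β → M) :=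
  (Equiv.curry α β M).trans ((Equiv.piCongrRight fun _ => e).trans (Equiv.curry α β M).symm)

lemma rowwise_symm_apply {α β M : Type*} (e : (β → M) ≃ (β → M)) (f : α × β → M) (z : α × β) :
    (rowwise e).symm f z = e.symm (fun y => f (z.1, y)) z.2 :=
  rfl

lemma encU_eq_funMatrix {p q n : ℕ} (hn : 0 < n) (hnq : n ≤ q) (hodd : Odd n) :
    encU p q n hn hnq = funMatrix (rowwise (codeEquiv hn hnq hodd) : GState p q → GState p q) := by
  rw [encU, List.map_congr_left fun x _ => rowU_eq_funMatrix hn hnq x, list_prod_map_funMatrix]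
  congr 1
  funext f z
  rw [list_prod_map_onRow_apply _ _ (List.nodup_finRange p), if_pos (List.mem_finRange _)]
  rfl

lemma sum_pauli_apply_mul_pauli_apply (a b c d : Fin 2) :
    ∑ w, pauli w a b * pauli w c d = if a = d ∧ b = c then 2 else 0 := by
  fin_cases a <;> fin_cases b <;> fin_cases c <;> fin_cases d <;>
    simp [Fin.sum_univ_four, pauli] <;> norm_num

lemma pauli_apply_pow_four {w : Fin 4} {a b : Fin 2} (h : pauli w a b ≠ 0) :
    pauli w a b ^ 4 = 1 := by
  fin_cases w <;> fin_cases a <;> fin_cases b <;> simp_all [pauli] <;>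
    norm_num [neg_pow, Complex.I_pow_four]

lemma pauli_apply_mul_pauli_apply_add (w : Fin 4) (s a b : Fin 2) :
    pauli w a (a + s) * pauli w b (b + s) = pauli w 0 s * pauli w (a + b) (a + b + s) := by
  fin_cases w <;> fin_cases s <;> fin_cases a <;> fin_cases b <;> simp [pauli]

lemma add_eq_add_of_pauli_apply_ne_zero {w : Fin 4} {a b a' b' : Fin 2}
    (h : pauli w a b ≠ 0) (h' : pauli w a' b' ≠ 0) : a + b = a' + b' := by
  fin_cases w <;> fin_cases a <;> fin_cases b <;> fin_cases a' <;> fin_cases b' <;>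
    simp_all [pauli]

lemma prod_apply_eq_pow_mul_apply_sum {A M : Type*} [AddCommMonoid A] [CommMonoid M]
    {h : A → M} (hh : ∀ a b, h a * h b = h 0 * h (a + b)) {k : ℕ} (G : Fin (k + 1) → A) :
    ∏ y, h (G y) = h 0 ^ k * h (∑ y, G y) := by
  induction k with
  | zero => simp
  | succ k ih =>
    rw [Fin.prod_univ_succ, Fin.sum_univ_succ, ih, mul_left_comm, hh, pow_succ, mul_assoc]

/-- `a ↦ σ_w(a, a + s)` is `σ_w(0, s)` times a character of `Fin 2`, and `σ_w(0, s)` is `0` or a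
fourth root of unity, so the `n - 1 ≡ 0 (mod 4)` extra factors of it disappear. -/
lemma prod_pauli_apply_add_of_mod_four {n : ℕ} (h4 : n % 4 = 1) (w : Fin 4) (s : Fin 2)
    (G : Fin n → Fin 2) :
    ∏ y, pauli w (G y) (G y + s) = pauli w (∑ y, G y) (∑ y, G y + s) := by
  obtain ⟨k, rfl⟩ : ∃ k, n = 4 * k + 1 := ⟨n / 4, by omega⟩
  have hchar := pauli_apply_mul_pauli_apply_add w s
  rw [prod_apply_eq_pow_mul_apply_sum (h := fun a => pauli w a (a + s))
    fun a b => (zero_add s).symm ▸ hchar a b, zero_add]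
  by_cases h₀ : pauli w 0 s = 0
  · have hsum : pauli w (∑ y, G y) (∑ y, G y + s) = 0 := by
      simpa [h₀] using hchar (∑ y, G y) (∑ y, G y)
    simp [hsum]
  · rw [pow_mul, pauli_apply_pow_four h₀, one_pow, one_mul]

lemma prod_pauli_apply_of_mod_four {n : ℕ} (h4 : n % 4 = 1) (w : Fin 4) (G F : Fin n → Fin 2) :
    ∏ y, pauli w (G y) (F y) =
      if ∃ s, ∀ y, F y = G y + s then pauli w (∑ y, G y) (∑ y, F y) else 0 := by
  split_ifs with hshift
  · obtain ⟨s, hs⟩ := hshift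
    simp only [hs, Finset.sum_add_distrib, Finset.sum_const, Finset.card_univ, Fintype.card_fin,
      (Nat.odd_iff.mpr (by omega) : Odd n).nsmul_fin_two]
    exact prod_pauli_apply_add_of_mod_four h4 w s G
  · by_contra hne
    have hnz := Finset.prod_ne_zero_iff.mp hne
    let y₀ : Fin n := ⟨0, by omega⟩
    refine hshift ⟨G y₀ + F y₀, fun y => ?_⟩
    rw [← add_eq_add_of_pauli_apply_ne_zero (hnz y (Finset.mem_univ _))
      (hnz y₀ (Finset.mem_univ _)), ← add_assoc, fin_two_add_self, zero_add]

section CodeRows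

variable {n m : ℕ} (hn : 0 < n)

lemma decodeRow_eq_decodeRow_iff (G F : Fin (n + m) → Fin 2) :
    (∀ y, y ≠ ⟨0, Nat.add_pos_left hn m⟩ →
        decodeRow hn (Nat.le_add_right n m) G y = decodeRow hn (Nat.le_add_right n m) F y) ↔
      (∃ s, ∀ i : Fin n, F (Fin.castAdd m i) = G (Fin.castAdd m i) + s) ∧
        ∀ j : Fin m, G (Fin.natAdd n j) = F (Fin.natAdd n j) := by
  set y₀ : Fin (n + m) := ⟨0, Nat.add_pos_left hn m⟩
  have hshift : ∀ a b c d : Fin 2, a + b = c + d → c = a + (b + d) := by decide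
  constructor
  · intro h
    refine ⟨⟨G y₀ + F y₀, fun i => ?_⟩, fun j => ?_⟩
    · by_cases hi : (i : ℕ) = 0
      · have : Fin.castAdd m i = y₀ := Fin.ext hi
        rw [this, ← add_assoc, fin_two_add_self, zero_add]
      · refine hshift _ _ _ _ ?_
        simpa [decodeRow, hi] using h (Fin.castAdd m i) (fun h' => hi (congrArg Fin.val h'))
    · have := h (Fin.natAdd n j) fun h' => by simp [y₀, Fin.ext_iff] at h'; omega
      simpa [decodeRow] using this
  · rintro ⟨⟨s, hs⟩, htail⟩ y hy
    have hs₀ : F y₀ = G y₀ + s := hs ⟨0, hn⟩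
    induction y using Fin.addCases with
    | left i =>
      have hi : (i : ℕ) ≠ 0 := fun h' => hy (Fin.ext h')
      simp only [decodeRow, Fin.val_castAdd, i.isLt, hi, if_true, if_false, hs i]
      rw [show F ⟨0, _⟩ = G y₀ + s from hs₀, add_add_add_comm, fin_two_add_self, add_zero]
    | right j => simp [decodeRow, htail j]

lemma sum_pauli_mul_prod_pauli_row (h4 : n % 4 = 1) (G F : Fin (n + m) → Fin 2) (a b : Fin 2) :
    ∑ w, pauli w a b * ∏ y : Fin (n + m), pauli (if (y : ℕ) < n then w else 0) (G y) (F y) =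
      if (∀ y, y ≠ ⟨0, Nat.add_pos_left hn m⟩ →
            decodeRow hn (Nat.le_add_right n m) G y = decodeRow hn (Nat.le_add_right n m) F y) ∧
          a = rowParity (Nat.le_add_right n m) F ∧ b = rowParity (Nat.le_add_right n m) G
      then 2 else 0 := by
  have hsplit : ∀ w, ∏ y : Fin (n + m), pauli (if (y : ℕ) < n then w else 0) (G y) (F y) =
      (∏ i : Fin n, pauli w (G (Fin.castAdd m i)) (F (Fin.castAdd m i))) *
        if ∀ j : Fin m, G (Fin.natAdd n j) = F (Fin.natAdd n j) then 1 else 0 := fun w => by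
    simp [Fin.prod_univ_add, pauli, one_apply, Finset.prod_boole]
  simp_rw [hsplit, prod_pauli_apply_of_mod_four h4, decodeRow_eq_decodeRow_iff]
  have hpar : ∀ H, rowParity (Nat.le_add_right n m) H = ∑ i : Fin n, H (Fin.castAdd m i) :=
    fun _ => rfl
  rw [hpar, hpar]
  by_cases hK : ∃ s, ∀ i : Fin n, F (Fin.castAdd m i) = G (Fin.castAdd m i) + s <;>
  by_cases hT : ∀ j : Fin m, G (Fin.natAdd n j) = F (Fin.natAdd n j) <;>
  simp [hK, hT, sum_pauli_apply_mul_pauli_apply]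

end CodeRows

lemma sum_pauliString_mul_gridPauli_apply {p q n : ℕ} (a b : Fin p → Fin 2) (g f : GState p q) :
    ∑ v : Fin p → Fin 4,
        pauliString v a b * gridPauli (fun x y => if (y : ℕ) < n then v x else 0) g f =
      ∏ x, ∑ w, pauli w (a x) (b x) *
        ∏ y : Fin q, pauli (if (y : ℕ) < n then w else 0) (g (x, y)) (f (x, y)) := by
  rw [Fintype.prod_sum]
  refine Finset.sum_congr rfl fun v _ => ?_
  simp only [pauliString, gridPauli, Fintype.prod_prod_type, ← Finset.prod_mul_distrib]

lemma sum_trace_smul_gridPauli_apply {p n m : ℕ} (hn : 0 < n) (h4 : n % 4 = 1)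
    (Ψ : Matrix (Fin p → Fin 2) (Fin p → Fin 2) ℂ) (g f : GState p (n + m)) :
    (∑ v : Fin p → Fin 4, (pauliString v * Ψ).trace •
        gridPauli (fun x y => if (y : ℕ) < n then v x else 0)) g f =
      if ∀ x y, y ≠ ⟨0, Nat.add_pos_left hn m⟩ →
          decodeRow hn (Nat.le_add_right n m) (fun y => g (x, y)) y =
            decodeRow hn (Nat.le_add_right n m) (fun y => f (x, y)) y
      then 2 ^ p * Ψ (fun x => rowParity (Nat.le_add_right n m) fun y => g (x, y))
        (fun x => rowParity (Nat.le_add_right n m) fun y => f (x, y))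
      else 0 := by
  set C := ∀ x y, y ≠ ⟨0, Nat.add_pos_left hn m⟩ →
    decodeRow hn (Nat.le_add_right n m) (fun y => g (x, y)) y =
      decodeRow hn (Nat.le_add_right n m) (fun y => f (x, y)) y
  set B := fun x => rowParity (Nat.le_add_right n m) fun y => g (x, y)
  set A := fun x => rowParity (Nat.le_add_right n m) fun y => f (x, y)
  have hcoef : ∀ a b : Fin p → Fin 2,
      ∑ v : Fin p → Fin 4,
          pauliString v a b * gridPauli (fun x y => if (y : ℕ) < n then v x else 0) g f =
        if C ∧ a = A ∧ b = B then 2 ^ p else 0 := by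
    intro a b
    simp_rw [sum_pauliString_mul_gridPauli_apply, sum_pauli_mul_prod_pauli_row hn h4,
      Fintype.prod_ite_zero, Finset.prod_const, Finset.card_univ, Fintype.card_fin]
    congr 1
    simp only [C, A, B, forall_and, funext_iff]
  calc (∑ v : Fin p → Fin 4, (pauliString v * Ψ).trace •
          gridPauli (fun x y => if (y : ℕ) < n then v x else 0)) g f
      = ∑ a, ∑ b, Ψ b a * ∑ v : Fin p → Fin 4,
          pauliString v a b * gridPauli (fun x y => if (y : ℕ) < n then v x else 0) g f := by
        simp only [Matrix.sum_apply, Matrix.smul_apply, smul_eq_mul, trace, diag, mul_apply,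
          Finset.sum_mul, Finset.mul_sum]
        rw [Finset.sum_comm]
        refine Finset.sum_congr rfl fun a _ => ?_
        rw [Finset.sum_comm]
        exact Finset.sum_congr rfl fun b _ => Finset.sum_congr rfl fun v _ => by ring
    _ = if C then 2 ^ p * Ψ B A else 0 := by
        simp_rw [hcoef]
        by_cases hC : C <;> simp [hC, ite_and, mul_comm]

theorem encoded_state_pauli_support_general (p n m : ℕ) (hn : 0 < n)
    (h4 : n % 4 = 1)
    (Ψ : Matrix (Fin p → Fin 2) (Fin p → Fin 2) ℂ) :
    encU p (n + m) n hn (Nat.le_add_right n m) *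
        Echan p (n + m) (Nat.add_pos_left hn m) Ψ *
        (encU p (n + m) n hn (Nat.le_add_right n m))ᴴ =
      ((1 : ℂ) / 2 ^ (p * (n + m))) •
        ∑ v : Fin p → Fin 4, (pauliString v * Ψ).trace •
          gridPauli (fun x y => if (y : ℕ) < n then v x else 0) := by
  rw [encU_eq_funMatrix hn _ (Nat.odd_iff.mpr (by omega)), funMatrix_mul_mul_conjTranspose]
  ext g f
  rw [Matrix.smul_apply, sum_trace_smul_gridPauli_apply hn h4, submatrix_apply]
  simp only [Echan, rowwise_symm_apply, codeEquiv_symm, decodeRow_apply_zero, smul_eq_mul]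
  have hscale : ((1 : ℂ) / 2) ^ (p * (n + m - 1)) = 1 / 2 ^ (p * (n + m)) * 2 ^ p := by
    rw [show p * (n + m) = p * (n + m - 1) + p by rw [← Nat.mul_add_one]; congr 1; omega,
      pow_add, div_pow, one_pow]
    field_simp
  split_ifs with hC
  · simp only [if_pos hC, hscale]
    ring
  · simp [hC]

/-- **Pauli support of the full encoded state (equation (r-decomposition)).**
Let `n ≡ 1 (mod 4)` and `p, m` positive, `q = n+m`. For any density matrix `Ψ` on `p`
qubits, `U·E(Ψ)·U† = 2^{−pq} · Σ_{v ∈ {0,1,2,3}^p} tr(σ_v Ψ) · σ_{A_v}`, where `A_v` is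
the `p × q` matrix whose first `n` columns each equal `v` and whose last `m` columns
are zero. -/
theorem encoded_state_pauli_support (p n m : ℕ) (hp : 0 < p) (hn : 0 < n)
    (h4 : n % 4 = 1) (hm : 0 < m)
    (Ψ : Matrix (Fin p → Fin 2) (Fin p → Fin 2) ℂ)
    (hΨ : Ψ.PosSemidef) (hΨtr : Ψ.trace = 1) :
    encU p (n + m) n hn (Nat.le_add_right n m) *
        Echan p (n + m) (Nat.add_pos_left hn m) Ψ *
        (encU p (n + m) n hn (Nat.le_add_right n m))ᴴ =
      ((1 : ℂ) / 2 ^ (p * (n + m))) •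
        ∑ v : Fin p → Fin 4, (pauliString v * Ψ).trace •
          gridPauli (fun x y => if (y : ℕ) < n then v x else 0) :=
  encoded_state_pauli_support_general p n m hn h4 Ψ
end
end

section
/- Orbit of a Pauli string under column permutations: let p, n, m be positive integers, q = n+m, and let v ∈ {0,1,2,3}^p be nonzero. Let A be the p×q matrix whose first n columns each equal v and whose last m columns are zero, and let S_A = { P_π · σ_A · P_π† : π a permutation of Fin q }. Then S_A has exactly binom(n+m, n) elements, and the sum σ̃_A of the elements of S_A satisfies tr(σ̃_A²) = binom(n+m, n) · 2^{pq}. -/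
open Matrix ComplexOrder

noncomputable section

lemma po_pauli_trace_mul (a b : Fin 4) :
    (pauli a * pauli b).trace = if a = b then 2 else 0 := by
  fin_cases a <;> fin_cases b <;>
    simp [pauli, Matrix.trace, Matrix.mul_apply, Fin.sum_univ_two, Matrix.diag,
      Matrix.one_apply, Complex.ext_iff] <;> norm_num

lemma po_trace_gridPauli_mul {p q : ℕ} (A B : Fin p → Fin q → Fin 4) :
    (gridPauli A * gridPauli B).trace
      = ∏ z : Fin p × Fin q, (pauli (A z.1 z.2) * pauli (B z.1 z.2)).trace := by
  have rhs : ∀ z : Fin p × Fin q, (pauli (A z.1 z.2) * pauli (B z.1 z.2)).trace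
      = ∑ ab : Fin 2 × Fin 2, pauli (A z.1 z.2) ab.1 ab.2 * pauli (B z.1 z.2) ab.2 ab.1 := by
    intro z
    rw [Matrix.trace, Fintype.sum_prod_type]
    simp [Matrix.diag, Matrix.mul_apply]
  simp only [rhs, Finset.prod_univ_sum]
  rw [Matrix.trace]
  simp only [Matrix.diag, Matrix.mul_apply, gridPauli]
  rw [← Finset.sum_product']
  refine Finset.sum_nbij' (fun gf => fun z => (gf.1 z, gf.2 z))
    (fun h => (fun z => (h z).1, fun z => (h z).2)) ?_ ?_ ?_ ?_ ?_ <;>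
    simp [Finset.prod_mul_distrib]

lemma po_trace_eq {p q : ℕ} (A B : Fin p → Fin q → Fin 4) :
    (gridPauli A * gridPauli B).trace = if A = B then (2:ℂ)^(p*q) else 0 := by
  rw [po_trace_gridPauli_mul]
  by_cases h : A = B
  · subst h
    rw [if_pos rfl]
    simp [po_pauli_trace_mul, Finset.card_univ]
  · rw [if_neg h]
    have : ∃ z : Fin p × Fin q, A z.1 z.2 ≠ B z.1 z.2 := by
      by_contra hc
      push_neg at hc
      exact h (funext fun x => funext fun y => hc (x, y))
    obtain ⟨z, hz⟩ := this
    apply Finset.prod_eq_zero (Finset.mem_univ z)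
    rw [po_pauli_trace_mul, if_neg hz]

lemma po_gridPauli_inj {p q : ℕ} :
    Function.Injective (gridPauli : (Fin p → Fin q → Fin 4) → GMat p q) := by
  intro A B h
  by_contra hne
  have h1 := po_trace_eq A B
  rw [h, po_trace_eq B B, if_pos rfl, if_neg hne] at h1
  exact pow_ne_zero _ two_ne_zero h1

lemma po_permMat_eq {p q : ℕ} (π : Equiv.Perm (Fin q)) (g h : GState p q) :
    permMat p q π g h = if h = (fun z => g (z.1, π z.2)) then (1:ℂ) else 0 := by
  unfold permMat
  congr 1
  simp only [eq_iff_iff]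
  constructor
  · intro H; funext z; exact (H z.1 z.2).symm
  · intro H x y; rw [H]

lemma po_perm_conj {p q : ℕ} (π : Equiv.Perm (Fin q)) (A : Fin p → Fin q → Fin 4) :
    permMat p q π * gridPauli A * (permMat p q π)ᴴ
      = gridPauli (fun x y => A x (π⁻¹ y)) := by
  ext g f
  have h1 : ∀ (M : GMat p q) g f, (permMat p q π * M) g f = M (fun z => g (z.1, π z.2)) f := by
    intro M g f
    rw [Matrix.mul_apply]
    simp [po_permMat_eq]
  have h2 : ∀ (M : GMat p q) g f,
      (M * (permMat p q π)ᴴ) g f = M g (fun z => f (z.1, π z.2)) := by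
    intro M g f
    rw [Matrix.mul_apply]
    simp [Matrix.conjTranspose_apply, po_permMat_eq]
  rw [h2, h1]
  unfold gridPauli
  exact Fintype.prod_equiv (Equiv.prodCongr (Equiv.refl (Fin p)) π) _ _
    (fun z => by rcases z with ⟨x, y⟩; simp)

/-- **Orbit of a Pauli string under column permutations.**
Let `p, n, m` be positive, `q = n+m`, and let `v ∈ {0,1,2,3}^p` be nonzero. With `A` the
`p × q` matrix whose first `n` columns each equal `v` and whose last `m` columns are
zero, the orbit `S_A = { P_π · σ_A · P_π† : π ∈ S_q }` has exactly `binom(n+m, n)`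
elements, and its sum `σ̃_A` satisfies `tr(σ̃_A²) = binom(n+m, n) · 2^{pq}`. -/
theorem pauli_orbit_under_column_permutations (p n m : ℕ) (hp : 0 < p) (hn : 0 < n)
    (hm : 0 < m) (v : Fin p → Fin 4) (hv : v ≠ fun _ => 0) :
    ({M : GMat p (n + m) | ∃ π : Equiv.Perm (Fin (n + m)),
        M = permMat p (n + m) π *
          gridPauli (fun x y => if (y : ℕ) < n then v x else 0) *
          (permMat p (n + m) π)ᴴ}.ncard = (n + m).choose n) ∧
      (((∑ᶠ M ∈ {M : GMat p (n + m) | ∃ π : Equiv.Perm (Fin (n + m)),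
          M = permMat p (n + m) π *
            gridPauli (fun x y => if (y : ℕ) < n then v x else 0) *
            (permMat p (n + m) π)ᴴ}, M) *
        (∑ᶠ M ∈ {M : GMat p (n + m) | ∃ π : Equiv.Perm (Fin (n + m)),
          M = permMat p (n + m) π *
            gridPauli (fun x y => if (y : ℕ) < n then v x else 0) *
            (permMat p (n + m) π)ᴴ}, M)).trace =
        ((n + m).choose n : ℂ) * 2 ^ (p * (n + m))) := by
  classical
  set A0 : Fin p → Fin (n + m) → Fin 4 :=
    (fun x y => if (y : ℕ) < n then v x else 0) with hA0
  set B : Finset (Fin (n + m)) → (Fin p → Fin (n + m) → Fin 4) :=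
    (fun T x y => if y ∈ T then v x else 0) with hB
  obtain ⟨x0, hx0⟩ : ∃ x, v x ≠ 0 := by
    by_contra hc
    push_neg at hc
    exact hv (funext hc)
  have hBinj : Function.Injective B := by
    intro T T' h
    ext y
    have h2 := congrFun (congrFun h x0) y
    by_cases hy : y ∈ T <;> by_cases hy' : y ∈ T' <;>
      simp only [hB, hy, hy', if_true, if_false, if_pos, if_neg] at h2 ⊢ <;> tauto
  set T0 : Finset (Fin (n + m)) := Finset.univ.filter (fun y => (y : ℕ) < n) with hT0
  have hT0card : T0.card = n := by
    have : T0 = Finset.map (Fin.castAddEmb m) Finset.univ := by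
      ext y
      simp only [hT0, Finset.mem_filter, Finset.mem_univ, true_and, Finset.mem_map]
      constructor
      · intro hy
        exact ⟨⟨(y : ℕ), hy⟩, by simp [Fin.castAddEmb, Fin.ext_iff]⟩
      · rintro ⟨i, rfl⟩
        simp [Fin.castAddEmb]
    rw [this, Finset.card_map, Finset.card_univ, Fintype.card_fin]
  have hA0B : A0 = B T0 := by
    funext x y
    simp only [hA0, hB, hT0, Finset.mem_filter, Finset.mem_univ, true_and]
  have hkey : ∀ π : Equiv.Perm (Fin (n + m)),
      (fun x y => A0 x (π⁻¹ y)) = B (T0.image π) := by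
    intro π
    funext x y
    have hmem : y ∈ T0.image π ↔ ((π⁻¹ y : Fin (n + m)) : ℕ) < n := by
      simp only [hT0, Finset.mem_image, Finset.mem_filter, Finset.mem_univ, true_and]
      constructor
      · rintro ⟨a, ha, rfl⟩
        simpa using ha
      · intro hy
        exact ⟨π⁻¹ y, hy, by simp⟩
    simp only [hA0, hB]
    exact if_congr hmem.symm rfl rfl
  have hexists : ∀ T : Finset (Fin (n + m)), T.card = n →
      ∃ π : Equiv.Perm (Fin (n + m)), T0.image π = T := by
    intro T hT
    have hcard : Fintype.card {y // y ∈ T0} = Fintype.card {y // y ∈ T} := by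
      simp only [Fintype.card_coe, hT0card, hT]
    refine ⟨(Fintype.equivOfCardEq hcard).extendSubtype, ?_⟩
    apply Finset.eq_of_subset_of_card_le
    · intro y hy
      obtain ⟨a, ha, rfl⟩ := Finset.mem_image.mp hy
      exact Equiv.extendSubtype_mem _ a ha
    · rw [Finset.card_image_of_injective _ (Equiv.injective _), hT0card, hT]
  have hSet : {M : GMat p (n + m) | ∃ π : Equiv.Perm (Fin (n + m)),
        M = permMat p (n + m) π * gridPauli A0 * (permMat p (n + m) π)ᴴ}
      = ↑((Finset.univ.powersetCard n).image fun T => gridPauli (B T)) := by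
    ext M
    simp only [Set.mem_setOf_eq, Finset.coe_image, Set.mem_image, Finset.mem_coe,
      Finset.mem_powersetCard]
    constructor
    · rintro ⟨π, rfl⟩
      refine ⟨T0.image π, ⟨Finset.subset_univ _, by
        rw [Finset.card_image_of_injective _ (Equiv.injective _), hT0card]⟩, ?_⟩
      rw [po_perm_conj, hkey]
    · rintro ⟨T, ⟨-, hT⟩, rfl⟩
      obtain ⟨π, hπ⟩ := hexists T hT
      exact ⟨π, by rw [po_perm_conj, hkey, hπ]⟩
  have hGinj : Function.Injective (fun T => gridPauli (B T)) :=
    po_gridPauli_inj.comp hBinj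
  have hcardps : (Finset.univ.powersetCard n : Finset (Finset (Fin (n + m)))).card
      = (n + m).choose n := by
    rw [Finset.card_powersetCard, Finset.card_univ, Fintype.card_fin]
  constructor
  · rw [hSet, Set.ncard_coe_finset, Finset.card_image_of_injective _ hGinj, hcardps]
  · rw [hSet, finsum_mem_coe_finset, Finset.sum_image (fun a _ b _ h => hBinj (po_gridPauli_inj h)),
      Finset.sum_mul_sum, Matrix.trace_sum]
    simp only [Matrix.trace_sum, po_trace_eq]
    have hif : ∀ T T' : Finset (Fin (n + m)),
        (if B T = B T' then ((2:ℂ)) ^ (p * (n + m)) else 0)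
          = if T = T' then (2:ℂ) ^ (p * (n + m)) else 0 := by
      intro T T'
      exact if_congr hBinj.eq_iff rfl rfl
    simp only [hif]
    rw [Finset.sum_congr rfl (fun T hT => Finset.sum_ite_eq (Finset.univ.powersetCard n) T
      (fun _ => (2:ℂ) ^ (p * (n + m))))]
    simp only [Finset.sum_ite_mem]
    rw [Finset.inter_self, Finset.sum_const, hcardps, nsmul_eq_mul]

end
end

section
/- Coefficient bound in the proof of Lemma 3: let p, n, m be positive integers, q = n+m, and let M be a Hermitian matrix on the p×q grid of qubits with operator norm at most 1. Let M̃ = (1/q!)·Σ_{π ∈ S_q} P_π M P_π† be its average over all column permutations. Then for every nonzero v ∈ {0,1,2,3}^p, with A the p×q matrix whose first n columns each equal v and whose last m columns are zero, |tr(M̃ · σ_A)| ≤ 2^{pq} · (binom(n+m, n))^{−1/2}. -/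
open Matrix ComplexOrder

noncomputable section

/-!
Writing `P_π† σ_A P_π = σ_{A∘π}`, the trace becomes `tr(M N)` with `N = (1/q!) Σ_π σ_{A∘π}`.
Cauchy–Schwarz for the Hilbert–Schmidt inner product gives `|tr(M N)|² ≤ ‖M‖²_HS ‖N‖²_HS`.
Every column of `M` has norm at most `‖M‖ ≤ 1`, so `‖M‖²_HS ≤ 2^{pq}`. Pauli strings are
orthogonal, `tr(σ_A† σ_B) = 2^{pq} δ_{AB}`, so `‖N‖²_HS` is `2^{pq}/q!²` times the number of
pairs `(π, τ)` with `A∘π = A∘τ`. As `v ≠ 0`, these are the pairs for which `τ π⁻¹` maps the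
first `n` columns onto themselves; there are `q! n! m!` of them, whence
`‖N‖²_HS = 2^{pq} / binom(n+m, n)`.
-/

open scoped Finset

namespace Matrix

variable {ι 𝕜 : Type*} [Fintype ι] [RCLike 𝕜]

lemma trace_conjTranspose_mul {α : Type*} [NonUnitalNonAssocSemiring α] [Star α]
    (X Y : Matrix ι ι α) :
    (Xᴴ * Y).trace = ∑ i, ∑ j, star (X j i) * Y j i := by
  simp [trace, mul_apply]

lemma ofReal_sum_norm_sq (X : Matrix ι ι 𝕜) :
    ((∑ i, ∑ j, ‖X i j‖ ^ 2 : ℝ) : 𝕜) = (Xᴴ * X).trace := by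
  rw [trace_conjTranspose_mul, Finset.sum_comm]
  push_cast
  simp_rw [← RCLike.conj_mul]
  rfl

lemma norm_trace_mul_sq_le (X Y : Matrix ι ι 𝕜) :
    ‖(X * Y).trace‖ ^ 2 ≤ (∑ i, ∑ j, ‖X i j‖ ^ 2) * ∑ i, ∑ j, ‖Y i j‖ ^ 2 := by
  have hY : ∑ i, ∑ j, ‖Y i j‖ ^ 2 = ∑ i, ∑ j, ‖Y j i‖ ^ 2 := Finset.sum_comm
  have htrace : ‖(X * Y).trace‖ ≤ ∑ z : ι × ι, ‖X z.1 z.2‖ * ‖Y z.2 z.1‖ := by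
    simp only [trace, diag_apply, mul_apply, Fintype.sum_prod_type, ← norm_mul]
    exact (norm_sum_le _ _).trans (Finset.sum_le_sum fun i _ => norm_sum_le _ _)
  rw [hY, ← Fintype.sum_prod_type' (fun i j => ‖X i j‖ ^ 2),
    ← Fintype.sum_prod_type' (fun i j => ‖Y j i‖ ^ 2)]
  exact (pow_le_pow_left₀ (norm_nonneg _) htrace 2).trans
    (Finset.sum_mul_sq_le_sq_mul_sq _ _ _)

lemma sum_norm_sq_le_card_mul_norm_toEuclideanCLM_sq [DecidableEq ι] (X : Matrix ι ι 𝕜) :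
    ∑ i, ∑ j, ‖X i j‖ ^ 2 ≤ Fintype.card ι * ‖toEuclideanCLM (𝕜 := 𝕜) X‖ ^ 2 := by
  have hcol : ∀ j, ∑ i, ‖X i j‖ ^ 2 ≤ ‖toEuclideanCLM (𝕜 := 𝕜) X‖ ^ 2 := by
    intro j
    have h := (toEuclideanCLM (𝕜 := 𝕜) X).le_opNorm (EuclideanSpace.single j 1)
    have hXj : toEuclideanCLM (𝕜 := 𝕜) X (EuclideanSpace.single j 1) =
        WithLp.toLp 2 (fun i => X i j) := by
      ext i; simp
    rw [hXj, PiLp.norm_single, norm_one, mul_one] at h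
    have := pow_le_pow_left₀ (norm_nonneg _) h 2
    rwa [EuclideanSpace.norm_sq_eq] at this
  rw [Finset.sum_comm]
  simpa using Finset.sum_le_sum fun j (_ : j ∈ Finset.univ) => hcol j

end Matrix

lemma le_mul_rpow_neg_half {x a c : ℝ} (ha : 0 ≤ a) (hc : 0 < c) (h : x ^ 2 ≤ a ^ 2 / c) :
    x ≤ a * c ^ (-(1 : ℝ) / 2) := by
  have hsqrt : √(a ^ 2 / c) = a * c ^ (-(1 : ℝ) / 2) := by
    rw [Real.sqrt_div' _ hc.le, Real.sqrt_sq ha, neg_div, Real.rpow_neg hc.le, Real.sqrt_eq_rpow,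
      div_eq_mul_inv]
  exact (le_abs_self x).trans (hsqrt ▸ Real.abs_le_sqrt h)

lemma card_filter_comp_eq_comp {α β : Type*} [Fintype α] [DecidableEq α] [DecidableEq β]
    (c : α → β) (π : Equiv.Perm α) :
    #{τ : Equiv.Perm α | c ∘ π = c ∘ τ} = Fintype.card {σ : Equiv.Perm α // c ∘ σ = c} := by
  rw [← Fintype.card_subtype]
  refine Fintype.card_congr ((Equiv.mulRight π⁻¹).subtypeEquiv fun τ => ?_)
  simp only [Equiv.coe_mulRight, Equiv.Perm.coe_mul, ← Function.comp_assoc]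
  rw [Equiv.Perm.inv_def, Equiv.comp_symm_eq, eq_comm]

lemma card_stabilizer_lt (n m : ℕ) :
    Fintype.card {σ : Equiv.Perm (Fin (n + m)) //
      (fun y : Fin (n + m) => decide ((y : ℕ) < n)) ∘ σ =
        fun y : Fin (n + m) => decide ((y : ℕ) < n)} =
      n.factorial * m.factorial := by
  have hlt : #{y : Fin (n + m) | (y : ℕ) < n} = n := by simp [Fin.card_filter_val_lt]
  have hge : #{y : Fin (n + m) | ¬(y : ℕ) < n} = m := by
    have := Finset.card_filter_add_card_filter_not (s := .univ) fun y : Fin (n + m) => (y : ℕ) < n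
    simp only [Finset.card_univ, Fintype.card_fin, hlt] at this
    omega
  rw [DomMulAct.stabilizer_card, Fintype.prod_bool]
  simp only [Fintype.card_subtype, decide_eq_true_eq, decide_eq_false_iff_not, hlt, hge]

variable {p q : ℕ}

def colPerm (π : Equiv.Perm (Fin q)) : GState p q ≃ GState p q :=
  (Equiv.prodCongr (Equiv.refl (Fin p)) π).arrowCongr (Equiv.refl (Fin 2))

lemma permMat_apply (π : Equiv.Perm (Fin q)) (g f : GState p q) :
    permMat p q π g f = if g = colPerm π f then 1 else 0 := by
  simp only [permMat, colPerm, funext_iff, Prod.forall, Equiv.arrowCongr_apply,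
    Function.comp_apply, Equiv.prodCongr_symm, Equiv.prodCongr_apply, Equiv.refl_symm,
    Equiv.refl_apply, Prod.map]
  congr 1
  exact propext ⟨fun h x y => by simpa using h x (π.symm y), fun h x y => by simpa using h x (π y)⟩

lemma conjTranspose_permMat_mul_mul_permMat (π : Equiv.Perm (Fin q)) (X : GMat p q) :
    (permMat p q π)ᴴ * X * permMat p q π = X.submatrix (colPerm π) (colPerm π) := by
  ext g f
  simp [mul_apply, permMat_apply, conjTranspose_apply]

lemma gridPauli_submatrix_colPerm (π : Equiv.Perm (Fin q)) (A : Fin p → Fin q → Fin 4) :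
    (gridPauli A).submatrix (colPerm π) (colPerm π) = gridPauli fun x y => A x (π y) := by
  ext g f
  simp only [gridPauli, submatrix_apply]
  exact Fintype.prod_equiv ((Equiv.refl (Fin p)).prodCongr π.symm) _ _ fun z => by simp [colPerm]

lemma trace_permAvg_mul (ρ B : GMat p q) :
    (permAvg p q ρ * B).trace =
      (ρ * ((q.factorial : ℂ)⁻¹ • ∑ π, (permMat p q π)ᴴ * B * permMat p q π)).trace := by
  simp only [permAvg, Matrix.smul_mul, Matrix.mul_smul, trace_smul, Matrix.sum_mul,
    Matrix.mul_sum, trace_sum]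
  refine congrArg _ (Finset.sum_congr rfl fun π _ => ?_)
  rw [Matrix.mul_assoc, Matrix.mul_assoc, trace_mul_comm, Matrix.mul_assoc, Matrix.mul_assoc]

lemma trace_conjTranspose_pauli_mul (a b : Fin 4) :
    ((pauli a)ᴴ * pauli b).trace = if a = b then 2 else 0 := by
  fin_cases a <;> fin_cases b <;>
    simp [pauli, trace_fin_two, mul_apply, Fin.sum_univ_two] <;> norm_num

lemma trace_conjTranspose_gridPauli_mul (A B : Fin p → Fin q → Fin 4) :
    ((gridPauli A)ᴴ * gridPauli B).trace = if A = B then 2 ^ (p * q) else 0 := by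
  have hsplit : ((gridPauli A)ᴴ * gridPauli B).trace =
      ∏ z : Fin p × Fin q, ((pauli (A z.1 z.2))ᴴ * pauli (B z.1 z.2)).trace := by
    simp only [trace_conjTranspose_mul, gridPauli, star_prod, ← Finset.prod_mul_distrib,
      Fintype.prod_sum]
  simp only [hsplit, trace_conjTranspose_pauli_mul, Finset.prod_ite_zero, Finset.prod_const,
    Finset.card_univ, Fintype.card_prod, Fintype.card_fin, Finset.mem_univ, forall_const,
    Prod.forall, funext_iff]

def symmGridPauli (A : Fin p → Fin q → Fin 4) : GMat p q :=
  (q.factorial : ℂ)⁻¹ • ∑ π : Equiv.Perm (Fin q), gridPauli fun x y => A x (π y)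

lemma trace_permAvg_mul_gridPauli (ρ : GMat p q) (A : Fin p → Fin q → Fin 4) :
    (permAvg p q ρ * gridPauli A).trace = (ρ * symmGridPauli A).trace := by
  simp only [trace_permAvg_mul, conjTranspose_permMat_mul_mul_permMat,
    gridPauli_submatrix_colPerm, symmGridPauli]

lemma sum_norm_sq_symmGridPauli (A : Fin p → Fin q → Fin 4) :
    ∑ g, ∑ f, ‖symmGridPauli A g f‖ ^ 2 =
      2 ^ (p * q) * Fintype.card {σ : Equiv.Perm (Fin q) //
        Function.swap A ∘ σ = Function.swap A} / q.factorial := by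
  have hcomp : ∀ π τ : Equiv.Perm (Fin q),
      ((fun x y => A x (π y)) = fun x y => A x (τ y)) ↔
        Function.swap A ∘ π = Function.swap A ∘ τ :=
    fun π τ => Function.swap_bijective.injective.eq_iff
  apply RCLike.ofReal_injective (K := ℂ)
  rw [ofReal_sum_norm_sq]
  simp only [symmGridPauli, conjTranspose_smul, conjTranspose_sum, Matrix.smul_mul,
    Matrix.mul_smul, Finset.sum_mul_sum, trace_smul, trace_sum,
    trace_conjTranspose_gridPauli_mul, hcomp, Finset.sum_ite, Finset.sum_const_zero, add_zero,
    Finset.sum_const, card_filter_comp_eq_comp, Finset.card_univ, Fintype.card_perm,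
    Fintype.card_fin, smul_eq_mul, nsmul_eq_mul, star_inv₀, star_natCast]
  push_cast
  field_simp

lemma card_stabilizer_swap_leadingCols (n m : ℕ) (v : Fin p → Fin 4) (hv : v ≠ fun _ => 0) :
    Fintype.card {σ : Equiv.Perm (Fin (n + m)) //
      Function.swap (fun x (y : Fin (n + m)) => if (y : ℕ) < n then v x else 0) ∘ σ =
        Function.swap fun x (y : Fin (n + m)) => if (y : ℕ) < n then v x else 0} =
      n.factorial * m.factorial := by
  set k : Bool → Fin p → Fin 4 := fun t => if t then v else fun _ => 0
  have hk : Function.Injective k := by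
    intro a b
    cases a <;> cases b <;> simp [k, hv, Ne.symm hv]
  have hswap : (Function.swap fun x (y : Fin (n + m)) => if (y : ℕ) < n then v x else 0) =
      k ∘ fun y : Fin (n + m) => decide ((y : ℕ) < n) := by
    funext y x
    by_cases hy : (y : ℕ) < n <;> simp [k, hy]
  rw [hswap, ← card_stabilizer_lt n m]
  exact Fintype.card_congr (Equiv.subtypeEquivRight fun σ => hk.comp_left.eq_iff)

theorem coefficient_bound_general (p n m : ℕ)
    (M : GMat p (n + m))
    (hMnorm : ‖Matrix.toEuclideanCLM (𝕜 := ℂ) M‖ ≤ 1)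
    (v : Fin p → Fin 4) (hv : v ≠ fun _ => 0) :
    ‖(permAvg p (n + m) M *
        gridPauli (fun x y => if (y : ℕ) < n then v x else 0)).trace‖ ≤
      2 ^ (p * (n + m)) * (((n + m).choose n : ℝ)) ^ (-(1 : ℝ) / 2) := by
  set A : Fin p → Fin (n + m) → Fin 4 := fun x y => if (y : ℕ) < n then v x else 0
  have hM : ∑ g, ∑ f, ‖M g f‖ ^ 2 ≤ 2 ^ (p * (n + m)) := by
    refine (sum_norm_sq_le_card_mul_norm_toEuclideanCLM_sq M).trans ?_
    have hcard : Fintype.card (GState p (n + m)) = 2 ^ (p * (n + m)) := by simp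
    rw [hcard, Nat.cast_pow, Nat.cast_ofNat]
    exact mul_le_of_le_one_right (by positivity) (pow_le_one₀ (norm_nonneg _) hMnorm)
  have hN : ∑ g, ∑ f, ‖symmGridPauli A g f‖ ^ 2 = 2 ^ (p * (n + m)) / (n + m).choose n := by
    rw [sum_norm_sq_symmGridPauli, card_stabilizer_swap_leadingCols n m v hv,
      Nat.cast_add_choose]
    push_cast
    field_simp
  have hchoose : (0 : ℝ) < (n + m).choose n := mod_cast Nat.choose_pos (Nat.le_add_right n m)
  rw [trace_permAvg_mul_gridPauli]
  refine le_mul_rpow_neg_half (by positivity) hchoose ?_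
  calc ‖(M * symmGridPauli A).trace‖ ^ 2
      ≤ (∑ g, ∑ f, ‖M g f‖ ^ 2) * ∑ g, ∑ f, ‖symmGridPauli A g f‖ ^ 2 :=
        norm_trace_mul_sq_le _ _
    _ ≤ 2 ^ (p * (n + m)) * (2 ^ (p * (n + m)) / (n + m).choose n) := by
        rw [hN]; gcongr
    _ = (2 ^ (p * (n + m))) ^ 2 / (n + m).choose n := by ring

/-- **Coefficient bound in the proof of Lemma 3.**
Let `p, n, m` be positive, `q = n+m`, and let `M` be a Hermitian matrix on the grid with
(L2→L2) operator norm at most 1. Let `M̃` be its average over all column permutations.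
Then for every nonzero `v ∈ {0,1,2,3}^p`, with `A` the `p × q` matrix whose first `n`
columns each equal `v` and whose last `m` columns are zero,
`|tr(M̃ · σ_A)| ≤ 2^{pq} · (binom(n+m, n))^{−1/2}`. -/
theorem coefficient_bound (p n m : ℕ) (hp : 0 < p) (hn : 0 < n) (hm : 0 < m)
    (M : GMat p (n + m)) (hM : M.IsHermitian)
    (hMnorm : ‖Matrix.toEuclideanCLM (𝕜 := ℂ) M‖ ≤ 1)
    (v : Fin p → Fin 4) (hv : v ≠ fun _ => 0) :
    ‖(permAvg p (n + m) M *
        gridPauli (fun x y => if (y : ℕ) < n then v x else 0)).trace‖ ≤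
      2 ^ (p * (n + m)) * (((n + m).choose n : ℝ)) ^ (-(1 : ℝ) / 2) :=
  coefficient_bound_general p n m M hMnorm v hv
end
end
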